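/- arXiv:2505.03607 — 5 statements merged into one kernel-verified Lean document; each statement's English description precedes it below -/
import Mathlib

section
/- If ‖h‖_{p,Q} < ∞ for some p > 2 and I_α(P‖Q) < ∞ for some α ≥ 2p/(p−2), then for i.i.d. X̃_1,…,X̃_n ∼ Q, the likelihood ratio estimator h̄_n = (1/n)∑ h(X̃_i) l(X̃_i) satisfies, for all δ ∈ (0,1): Pr( |h̄_n − E_P[h]| ≤ (2/√(nδ)) ‖h‖_{p,Q} I_α(P‖Q)^{1/α} ) ≥ 1 − δ. -/
open MeasureTheory ProbabilityTheory

noncomputable def lr {X : Type*} [MeasurableSpace X] (P Q : Measure X) (x : X) : ℝ :=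
  (P.rnDeriv Q x).toReal

noncomputable def Ialpha {X : Type*} [MeasurableSpace X] (P Q : Measure X) (α : ℝ) : ℝ :=
  ∫ x, lr P Q x ^ α ∂Q

/-- The `p`-norm of `h` w.r.t. the measure `Q`. -/
noncomputable def pNorm {X : Type*} [MeasurableSpace X] (h : X → ℝ) (p : ℝ) (Q : Measure X) : ℝ :=
  (∫ x, |h x| ^ p ∂Q) ^ (1 / p)

/-! Hölder's inequality with exponents `p` and `2p / (p - 2)`, whose reciprocals add up to
`1 / 2`, together with monotonicity of `Lᵅ` norms on a probability space, bounds the second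
moment of `h · l` under `Q` by `(‖h‖_{p,Q} I_α(P‖Q)^{1/α})²`. The summands `h(X̃ᵢ) l(X̃ᵢ)` are
independent with mean `E_P[h]`, so the estimator has variance at most that bound over `n`, and
Chebyshev's inequality concludes (even with `1` in place of the factor `2`). -/

namespace MeasureTheory

variable {α : Type*} {mα : MeasurableSpace α} {μ : Measure α} {f g : α → ℝ}

lemma eLpNorm_mul_le_of_two_lt [IsProbabilityMeasure μ] (hf : AEStronglyMeasurable f μ)
    (hg : AEStronglyMeasurable g μ) {p q : ℝ} (hp : 2 < p) (hq : 2 * p / (p - 2) ≤ q) :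
    eLpNorm (f * g) 2 μ ≤ eLpNorm f (.ofReal p) μ * eLpNorm g (.ofReal q) μ := by
  set r := 2 * p / (p - 2)
  have hr : 0 < r := div_pos (by linarith) (by linarith)
  have : ENNReal.HolderTriple (.ofReal p) (.ofReal r) 2 := by
    constructor
    rw [← ENNReal.ofReal_inv_of_pos (by linarith), ← ENNReal.ofReal_inv_of_pos hr,
      ← ENNReal.ofReal_add (by positivity) (by positivity)]
    have hinv : p⁻¹ + r⁻¹ = 2⁻¹ := by
      have : p - 2 ≠ 0 := by linarith
      simp only [r]
      field_simp
      ring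
    rw [hinv, ENNReal.ofReal_inv_of_pos two_pos, ENNReal.ofReal_ofNat]
  have hholder : eLpNorm (f • g) 2 μ ≤ eLpNorm f (.ofReal p) μ * eLpNorm g (.ofReal r) μ :=
    eLpNorm_smul_le_mul_eLpNorm hg hf
  calc eLpNorm (f * g) 2 μ ≤ eLpNorm f (.ofReal p) μ * eLpNorm g (.ofReal r) μ := hholder
    _ ≤ eLpNorm f (.ofReal p) μ * eLpNorm g (.ofReal q) μ := by
        gcongr
        exact eLpNorm_le_eLpNorm_of_exponent_le (ENNReal.ofReal_le_ofReal hq) hg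

lemma MemLp.mul_of_two_lt [IsProbabilityMeasure μ] {p q : ℝ} (hp : 2 < p)
    (hq : 2 * p / (p - 2) ≤ q) (hf : MemLp f (.ofReal p) μ) (hg : MemLp g (.ofReal q) μ) :
    MemLp (f * g) 2 μ :=
  ⟨hf.1.mul hg.1, (eLpNorm_mul_le_of_two_lt hf.1 hg.1 hp hq).trans_lt
    (ENNReal.mul_lt_top hf.2 hg.2)⟩

lemma lpNorm_mul_le_of_two_lt [IsProbabilityMeasure μ] {p q : ℝ} (hp : 2 < p)
    (hq : 2 * p / (p - 2) ≤ q) (hf : MemLp f (.ofReal p) μ) (hg : MemLp g (.ofReal q) μ) :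
    lpNorm (f * g) 2 μ ≤ lpNorm f (.ofReal p) μ * lpNorm g (.ofReal q) μ := by
  rw [← toReal_eLpNorm hf.1, ← toReal_eLpNorm hg.1, ← toReal_eLpNorm (hf.1.mul hg.1),
    ← ENNReal.toReal_mul]
  exact ENNReal.toReal_mono (ENNReal.mul_ne_top hf.eLpNorm_ne_top hg.eLpNorm_ne_top)
    (eLpNorm_mul_le_of_two_lt hf.1 hg.1 hp hq)

lemma sq_lpNorm_two (hf : AEStronglyMeasurable f μ) : lpNorm f 2 μ ^ 2 = ∫ x, f x ^ 2 ∂μ := by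
  rw [lpNorm_eq_integral_norm_rpow_toReal two_ne_zero ENNReal.ofNat_ne_top hf,
    ENNReal.toReal_ofNat, ← Real.rpow_natCast,
    ← Real.rpow_mul (integral_nonneg fun _ => by positivity)]
  norm_num

lemma memLp_ofReal_of_integrable_abs_rpow {p : ℝ} (hp : 0 < p) (hf : AEStronglyMeasurable f μ)
    (hint : Integrable (fun x => |f x| ^ p) μ) : MemLp f (.ofReal p) μ := by
  rw [← integrable_norm_rpow_iff hf (by simpa using hp) ENNReal.ofReal_ne_top,
    ENNReal.toReal_ofReal hp.le]
  exact hint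

lemma ofReal_one_sub_le_of_measure_compl_le [IsProbabilityMeasure μ] {s : Set α} {δ : ℝ}
    (hδ : 0 ≤ δ) (hs : μ sᶜ ≤ .ofReal δ) : .ofReal (1 - δ) ≤ μ s := by
  have hcover : 1 ≤ μ s + .ofReal δ :=
    calc 1 = μ (s ∪ sᶜ) := by rw [Set.union_compl_self, measure_univ]
      _ ≤ μ s + μ sᶜ := measure_union_le _ _
      _ ≤ μ s + .ofReal δ := by gcongr
  rw [ENNReal.ofReal_sub _ hδ, ENNReal.ofReal_one]
  exact tsub_le_iff_right.2 hcover

end MeasureTheory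

namespace ProbabilityTheory

variable {Ω : Type*} {mΩ : MeasurableSpace Ω} {μ : Measure Ω}

lemma measure_lt_abs_sub_integral_le_of_variance_le [IsFiniteMeasure μ] {Z : Ω → ℝ}
    (hZ : MemLp Z 2 μ) {c δ : ℝ} (hc : 0 ≤ c) (hvar : variance Z μ ≤ δ * c ^ 2) :
    μ {ω | c < |Z ω - μ[Z]|} ≤ .ofReal δ := by
  rcases hc.eq_or_lt with rfl | hc
  · have hvar0 : variance Z μ = 0 := le_antisymm (by simpa using hvar) (variance_nonneg _ _)
    have hnull : μ {ω | ¬Z ω = μ[Z]} = 0 :=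
      ae_iff.1 (ae_eq_integral_of_variance_eq_zero hZ hvar0)
    have hsub : {ω | 0 < |Z ω - μ[Z]|} ⊆ {ω | ¬Z ω = μ[Z]} := fun ω hω hZω => by simp_all
    simp only [measure_mono_null hsub hnull, zero_le]
  calc μ {ω | c < |Z ω - μ[Z]|} ≤ μ {ω | c ≤ |Z ω - μ[Z]|} :=
        measure_mono fun ω (hω : c < _) => hω.le
    _ ≤ .ofReal (variance Z μ / c ^ 2) := meas_ge_le_variance_div_sq hZ hc
    _ ≤ .ofReal δ := ENNReal.ofReal_le_ofReal ((div_le_iff₀ (by positivity)).2 hvar)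

lemma measure_lt_abs_average_sub_le [IsFiniteMeasure μ] {ι : Type*} [Fintype ι] [Nonempty ι]
    {Y : ι → Ω → ℝ}
    (hY : ∀ i, MemLp (Y i) 2 μ) (hindep : Pairwise fun i j => IndepFun (Y i) (Y j) μ)
    {m σ : ℝ} (hmean : ∀ i, μ[Y i] = m) (hσ : 0 ≤ σ) (hvar : ∀ i, variance (Y i) μ ≤ σ ^ 2)
    {δ : ℝ} (hδ : 0 < δ) :
    μ {ω | σ / √((Fintype.card ι : ℝ) * δ) < |(1 / (Fintype.card ι : ℝ)) * ∑ i, Y i ω - m|} ≤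
      .ofReal δ := by
  set N : ℝ := (Fintype.card ι : ℝ)
  have hN : 0 < N := Nat.cast_pos.2 Fintype.card_pos
  have hsum_mean : μ[∑ i, Y i] = N * m := by
    rw [Finset.sum_fn, integral_finsetSum _ fun i _ => (hY i).integrable one_le_two]
    simp [hmean, N]
  have hsum_var : variance (∑ i, Y i) μ ≤ δ * (N * (σ / √(N * δ))) ^ 2 := by
    rw [IndepFun.variance_sum (fun i _ => hY i) fun i _ j _ hij => hindep hij]
    calc ∑ i, variance (Y i) μ ≤ ∑ _i : ι, σ ^ 2 := Finset.sum_le_sum fun i _ => hvar i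
      _ = δ * (N * (σ / √(N * δ))) ^ 2 := by
        rw [mul_pow, div_pow, Real.sq_sqrt (by positivity)]
        field_simp
        simp [N, mul_comm]
  refine le_trans (measure_mono fun ω hω => ?_)
    (measure_lt_abs_sub_integral_le_of_variance_le (memLp_finsetSum' _ fun i _ => hY i)
      (by positivity) hsum_var)
  have hω : σ / √(N * δ) < |1 / N * ∑ i, Y i ω - m| := hω
  show N * (σ / √(N * δ)) < |(∑ i, Y i) ω - μ[∑ i, Y i]|
  rw [hsum_mean, Finset.sum_apply, show ∑ i, Y i ω - N * m = N * (1 / N * ∑ i, Y i ω - m) by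
    field_simp, abs_mul, abs_of_pos hN]
  exact mul_lt_mul_of_pos_left hω hN

lemma measure_lt_abs_average_comp_sub_le [IsProbabilityMeasure μ] {X : Type*}
    [MeasurableSpace X] {Q : Measure X} [IsProbabilityMeasure Q] {ι : Type*} [Fintype ι]
    [Nonempty ι] {Xs : ι → Ω → X}
    (hXs : ∀ i, MeasurePreserving (Xs i) μ Q) (hindep : iIndepFun Xs μ) {g : X → ℝ}
    (hg_meas : Measurable g) (hg : MemLp g 2 Q) {σ : ℝ} (hσ : 0 ≤ σ)
    (hg_sq : ∫ x, g x ^ 2 ∂Q ≤ σ ^ 2) {δ : ℝ} (hδ : 0 < δ) :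
    μ {ω | σ / √((Fintype.card ι : ℝ) * δ) <
      |(1 / (Fintype.card ι : ℝ)) * ∑ i, g (Xs i ω) - ∫ x, g x ∂Q|} ≤ .ofReal δ := by
  refine measure_lt_abs_average_sub_le (Y := fun i => g ∘ Xs i)
    (fun i => hg.comp_measurePreserving (hXs i))
    (fun i j hij => (hindep.indepFun hij).comp hg_meas hg_meas) (fun i => ?_) hσ (fun i => ?_) hδ
  · rw [← (hXs i).map_eq] at hg ⊢
    exact (integral_map (hXs i).aemeasurable hg.1).symm
  · calc variance (g ∘ Xs i) μ = variance g Q := (hXs i).variance_fun_comp hg.1.aemeasurable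
      _ ≤ ∫ x, g x ^ 2 ∂Q := variance_le_expectation_sq hg.1
      _ ≤ σ ^ 2 := hg_sq

end ProbabilityTheory

section PNorm

variable {X : Type*} [MeasurableSpace X] {Q : Measure X}

lemma pNorm_eq_lpNorm {h : X → ℝ} {p : ℝ} (hp : 0 < p) (hh : AEStronglyMeasurable h Q) :
    pNorm h p Q = lpNorm h (.ofReal p) Q := by
  rw [lpNorm_eq_integral_norm_rpow_toReal (by simpa using hp) ENNReal.ofReal_ne_top hh,
    ENNReal.toReal_ofReal hp.le, pNorm, one_div]
  simp_rw [Real.norm_eq_abs]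

lemma pNorm_nonneg (h : X → ℝ) (p : ℝ) : 0 ≤ pNorm h p Q :=
  Real.rpow_nonneg (integral_nonneg fun _ => by positivity) _

lemma integral_sq_mul_le_pNorm_mul_pNorm [IsProbabilityMeasure Q] {f g : X → ℝ} {p q : ℝ}
    (hp : 2 < p) (hq : 2 * p / (p - 2) ≤ q) (hf : MemLp f (.ofReal p) Q)
    (hg : MemLp g (.ofReal q) Q) : ∫ x, (f x * g x) ^ 2 ∂Q ≤ (pNorm f p Q * pNorm g q Q) ^ 2 := by
  have hq0 : 0 < q := (div_pos (by linarith) (by linarith)).trans_le hq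
  calc ∫ x, (f x * g x) ^ 2 ∂Q = lpNorm (f * g) 2 Q ^ 2 := (sq_lpNorm_two (hf.1.mul hg.1)).symm
    _ ≤ (lpNorm f (.ofReal p) Q * lpNorm g (.ofReal q) Q) ^ 2 :=
      pow_le_pow_left₀ lpNorm_nonneg (lpNorm_mul_le_of_two_lt hp hq hf hg) 2
    _ = (pNorm f p Q * pNorm g q Q) ^ 2 := by
      rw [pNorm_eq_lpNorm (by linarith) hf.1, pNorm_eq_lpNorm hq0 hg.1]

end PNorm

section LikelihoodRatio

variable {X : Type*} [MeasurableSpace X] (P Q : Measure X)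

lemma lr_nonneg (x : X) : 0 ≤ lr P Q x := ENNReal.toReal_nonneg

lemma measurable_lr : Measurable (lr P Q) := (P.measurable_rnDeriv Q).ennreal_toReal

lemma integral_mul_lr [P.HaveLebesgueDecomposition Q] [SigmaFinite P] (hPQ : P ≪ Q)
    (h : X → ℝ) : ∫ x, h x * lr P Q x ∂Q = ∫ x, h x ∂P := by
  simp_rw [mul_comm (h _)]
  exact integral_toReal_rnDeriv_mul hPQ

lemma Ialpha_rpow_one_div_eq_pNorm_lr (α : ℝ) : Ialpha P Q α ^ (1 / α) = pNorm (lr P Q) α Q := by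
  simp_rw [Ialpha, pNorm, abs_of_nonneg (lr_nonneg P Q _)]

end LikelihoodRatio

theorem lr_estimator_polynomial_concentration_pNorm_general
    {X : Type*} [MeasurableSpace X] {Ω : Type*} [MeasurableSpace Ω]
    (P Q : Measure X) [IsProbabilityMeasure P] [IsProbabilityMeasure Q]
    (hPQ : P ≪ Q) (h : X → ℝ) (hmeas : Measurable h)
    (p : ℝ) (hp : 2 < p) (hpnorm : Integrable (fun x => |h x| ^ p) Q)
    (α : ℝ) (hα : 2 * p / (p - 2) ≤ α)
    (hI : Integrable (fun x => lr P Q x ^ α) Q)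
    (μ : Measure Ω) [IsProbabilityMeasure μ]
    (n : ℕ) (hn : 0 < n) (Xs : Fin n → Ω → X)
    (hXmeas : ∀ i, Measurable (Xs i))
    (hid : ∀ i, Measure.map (Xs i) μ = Q)
    (hindep : iIndepFun Xs μ)
    (δ : ℝ) (hδ0 : 0 < δ) :
    ENNReal.ofReal (1 - δ) ≤
      μ {ω | |(1 / (n : ℝ)) * ∑ i, h (Xs i ω) * lr P Q (Xs i ω) - ∫ x, h x ∂P| ≤
        (2 / Real.sqrt ((n : ℝ) * δ)) * pNorm h p Q * Ialpha P Q α ^ (1 / α)} := by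
  have hα0 : 0 < α := (div_pos (by linarith) (by linarith)).trans_le hα
  have hl : Measurable (lr P Q) := measurable_lr P Q
  have hhp : MemLp h (.ofReal p) Q :=
    memLp_ofReal_of_integrable_abs_rpow (by linarith) hmeas.aestronglyMeasurable hpnorm
  have hlα : MemLp (lr P Q) (.ofReal α) Q :=
    memLp_ofReal_of_integrable_abs_rpow hα0 hl.aestronglyMeasurable
      (by simpa only [abs_of_nonneg (lr_nonneg P Q _)] using hI)
  have hC : 0 ≤ pNorm h p Q * Ialpha P Q α ^ (1 / α) := by
    rw [Ialpha_rpow_one_div_eq_pNorm_lr]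
    exact mul_nonneg (pNorm_nonneg _ _) (pNorm_nonneg _ _)
  have hsecond :
      ∫ x, (h x * lr P Q x) ^ 2 ∂Q ≤ (2 * (pNorm h p Q * Ialpha P Q α ^ (1 / α))) ^ 2 := by
    have := integral_sq_mul_le_pNorm_mul_pNorm hp hα hhp hlα
    rw [← Ialpha_rpow_one_div_eq_pNorm_lr] at this
    nlinarith
  have : Nonempty (Fin n) := ⟨⟨0, hn⟩⟩
  have hdev := measure_lt_abs_average_comp_sub_le (fun i => ⟨hXmeas i, hid i⟩) hindep
    (g := fun x => h x * lr P Q x) (hmeas.mul hl) (hhp.mul_of_two_lt hp hα hlα)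
    (mul_nonneg zero_le_two hC) hsecond hδ0
  rw [Fintype.card_fin, integral_mul_lr P Q hPQ h] at hdev
  refine ofReal_one_sub_le_of_measure_compl_le hδ0.le (le_trans (measure_mono fun ω hω => ?_) hdev)
  rw [Set.mem_ofPred_eq, mul_div_right_comm, ← mul_assoc]
  exact not_le.1 hω

/-- Polynomial concentration bound for the classical likelihood-ratio estimator
under a `p`-norm condition on `h`. -/
theorem lr_estimator_polynomial_concentration_pNorm
    {X : Type*} [MeasurableSpace X] {Ω : Type*} [MeasurableSpace Ω]
    (P Q : Measure X) [IsProbabilityMeasure P] [IsProbabilityMeasure Q]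
    (hPQ : P ≪ Q) (h : X → ℝ) (hmeas : Measurable h)
    (p : ℝ) (hp : 2 < p) (hpnorm : Integrable (fun x => |h x| ^ p) Q)
    (α : ℝ) (hα : 2 * p / (p - 2) ≤ α)
    (hI : Integrable (fun x => lr P Q x ^ α) Q)
    (μ : Measure Ω) [IsProbabilityMeasure μ]
    (n : ℕ) (hn : 0 < n) (Xs : Fin n → Ω → X)
    (hXmeas : ∀ i, Measurable (Xs i))
    (hid : ∀ i, Measure.map (Xs i) μ = Q)
    (hindep : iIndepFun Xs μ)
    (δ : ℝ) (hδ0 : 0 < δ) (hδ1 : δ < 1) :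
    ENNReal.ofReal (1 - δ) ≤
      μ {ω | |(1 / (n : ℝ)) * ∑ i, h (Xs i ω) * lr P Q (Xs i ω) - ∫ x, h x ∂P| ≤
        (2 / Real.sqrt ((n : ℝ) * δ)) * pNorm h p Q * Ialpha P Q α ^ (1 / α)} :=
  lr_estimator_polynomial_concentration_pNorm_general P Q hPQ h hmeas p hp hpnorm α hα hI μ n hn Xs
    hXmeas hid hindep δ hδ0
end

section
/- Let τ_n > 0 and define the truncated likelihood ratio l'_n(x) = min(l(x), τ_n). If ‖h‖_{∞,Q} < ∞ and I_α(P‖Q) < ∞ for some α ∈ (1,2], then the bias of the truncated estimator satisfies |E_Q[h·l'_n] − E_P[h]| ≤ ‖h‖_{∞,Q} · τ_n^{1−α} · I_α(P‖Q). -/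
open MeasureTheory

/-!
Writing `E_P[h] = E_Q[h l]` with `l = dP/dQ`, the bias is `E_Q[h (min l τ - l)]`, so it is at
most `‖h‖_∞ E_Q[l - min l τ]`. Pointwise `l - min l τ` vanishes where `l ≤ τ`, and where `l > τ`
it is at most `l ≤ l (l/τ)^(α-1) = τ^(1-α) l^α`.
-/

lemma sub_min_le_rpow_mul_rpow {l τ α : ℝ} (hl : 0 ≤ l) (hτ : 0 < τ) (hα : 1 ≤ α) :
    l - min l τ ≤ τ ^ (1 - α) * l ^ α := by
  rcases le_or_gt l τ with hle | hlt
  · rw [min_eq_left hle, sub_self]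
    positivity
  · have hl₀ : 0 < l := hτ.trans hlt
    rw [min_eq_right hlt.le]
    calc l - τ ≤ l := by linarith
      _ = τ ^ (1 - α) * τ ^ (α - 1) * l := by
          rw [← Real.rpow_add hτ, show 1 - α + (α - 1) = 0 by ring, Real.rpow_zero, one_mul]
      _ ≤ τ ^ (1 - α) * l ^ (α - 1) * l := by gcongr
      _ = τ ^ (1 - α) * l ^ α := by
          rw [mul_assoc, ← Real.rpow_add_one hl₀.ne', sub_add_cancel]

section

variable {X E : Type*} [MeasurableSpace X] {μ : Measure X}

lemma ae_norm_le_toReal_eLpNorm_top [NormedAddCommGroup E] {f : X → E}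
    (hf : eLpNorm f ⊤ μ ≠ ⊤) : ∀ᵐ x ∂μ, ‖f x‖ ≤ (eLpNorm f ⊤ μ).toReal := by
  filter_upwards [enorm_ae_le_eLpNormEssSup f μ] with x hx
  rw [← toReal_enorm, eLpNorm_exponent_top]
  exact ENNReal.toReal_mono (eLpNorm_exponent_top (f := f) ▸ hf) hx

lemma abs_integral_mul_sub_integral_mul_le {h f g G : X → ℝ} (hh : MemLp h ⊤ μ)
    (hf : Integrable f μ) (hg : Integrable g μ) (hG : Integrable G μ)
    (hfg : ∀ᵐ x ∂μ, |f x - g x| ≤ G x) :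
    |∫ x, h x * f x ∂μ - ∫ x, h x * g x ∂μ| ≤ (eLpNorm h ⊤ μ).toReal * ∫ x, G x ∂μ := by
  have hhf : Integrable (fun x => h x * f x) μ := hf.mul_of_top_right hh
  have hhg : Integrable (fun x => h x * g x) μ := hg.mul_of_top_right hh
  rw [← integral_sub hhf hhg, ← integral_const_mul, ← Real.norm_eq_abs]
  refine norm_integral_le_of_norm_le (hG.const_mul _) ?_
  filter_upwards [ae_norm_le_toReal_eLpNorm_top hh.eLpNorm_ne_top, hfg] with x hhx hfgx
  rw [← mul_sub, norm_mul, Real.norm_eq_abs]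
  exact mul_le_mul hhx hfgx (abs_nonneg _) ENNReal.toReal_nonneg

end

lemma integral_eq_integral_mul_lr {X : Type*} [MeasurableSpace X] {P Q : Measure X}
    [SigmaFinite P] [SigmaFinite Q] (hPQ : P ≪ Q) (h : X → ℝ) :
    ∫ x, h x ∂P = ∫ x, h x * lr P Q x ∂Q := by
  simp_rw [mul_comm (h _), lr, integral_toReal_rnDeriv_mul hPQ]

theorem truncated_lr_bias_bound_inftyNorm_general
    {X : Type*} [MeasurableSpace X]
    (P Q : Measure X) [IsProbabilityMeasure P] [IsProbabilityMeasure Q]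
    (hPQ : P ≪ Q) (h : X → ℝ) (hmeas : Measurable h)
    (hinf : eLpNorm h ⊤ Q < ⊤)
    (α : ℝ) (hα1 : 1 < α)
    (hI : Integrable (fun x => lr P Q x ^ α) Q)
    (τ : ℝ) (hτ : 0 < τ) :
    |(∫ x, h x * min (lr P Q x) τ ∂Q) - ∫ x, h x ∂P| ≤
      (eLpNorm h ⊤ Q).toReal * τ ^ (1 - α) * Ialpha P Q α := by
  have hl : Integrable (lr P Q) Q := Measure.integrable_toReal_rnDeriv
  have hbias : ∀ x, |min (lr P Q x) τ - lr P Q x| ≤ τ ^ (1 - α) * lr P Q x ^ α := fun x => by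
    rw [abs_sub_comm, abs_of_nonneg (sub_nonneg.2 (min_le_left _ _))]
    exact sub_min_le_rpow_mul_rpow ENNReal.toReal_nonneg hτ hα1.le
  rw [integral_eq_integral_mul_lr hPQ, mul_assoc, Ialpha, ← integral_const_mul]
  exact abs_integral_mul_sub_integral_mul_le ⟨hmeas.aestronglyMeasurable, hinf⟩
    (hl.inf (integrable_const τ)) hl (hI.const_mul _) (.of_forall hbias)

/-- Bias bound for the truncated likelihood-ratio estimator under the `∞`-norm:
`|E_Q[h·min(l,τ)] − E_P[h]| ≤ ‖h‖_{∞,Q} · τ^{1−α} · I_α(P‖Q)`. -/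
theorem truncated_lr_bias_bound_inftyNorm
    {X : Type*} [MeasurableSpace X]
    (P Q : Measure X) [IsProbabilityMeasure P] [IsProbabilityMeasure Q]
    (hPQ : P ≪ Q) (h : X → ℝ) (hmeas : Measurable h)
    (hinf : eLpNorm h ⊤ Q < ⊤)
    (α : ℝ) (hα1 : 1 < α) (hα2 : α ≤ 2)
    (hI : Integrable (fun x => lr P Q x ^ α) Q)
    (τ : ℝ) (hτ : 0 < τ) :
    |(∫ x, h x * min (lr P Q x) τ ∂Q) - ∫ x, h x ∂P| ≤
      (eLpNorm h ⊤ Q).toReal * τ ^ (1 - α) * Ialpha P Q α :=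
  truncated_lr_bias_bound_inftyNorm_general P Q hPQ h hmeas hinf α hα1 hI τ hτ
end

section
/- Let τ_n > 0 and l'_n(x) = min(l(x), τ_n). If ‖h‖_{∞,Q} < ∞ and I_α(P‖Q) < ∞ for some α ∈ (1,2], then for i.i.d. X̃_1,…,X̃_n ∼ Q the variance of the truncated estimator h̄_n^{Tru} = (1/n)∑ h(X̃_i) l'_n(X̃_i) satisfies Var(h̄_n^{Tru}) ≤ (1/n) ‖h‖²_{∞,Q} · τ_n^{2−α} · I_α(P‖Q). -/
open MeasureTheory ProbabilityTheory

/-!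
Write `l'ₙ = min(l, τ)`. Since `l' ≤ τ` and `l' ≤ l`, interpolation gives
`l'² = l'^(2-α) l'^α ≤ τ^(2-α) l^α`, so the second moment of `h l'` under `Q` is at most
`‖h‖²_∞ τ^(2-α) I_α(P‖Q)`. The estimator is the mean of `n` independent copies of `h l'`,
so its variance is `1/n` times the variance of `h l'` under `Q`, which is at most that
second moment.
-/

lemma min_sq_le_rpow_mul_rpow {l τ α : ℝ} (hl : 0 ≤ l) (hτ : 0 ≤ τ) (hα0 : 0 ≤ α)
    (hα2 : α ≤ 2) : min l τ ^ 2 ≤ τ ^ (2 - α) * l ^ α := by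
  rcases (le_min hl hτ).eq_or_lt with hmin | hmin
  · rw [← hmin, zero_pow two_ne_zero]
    positivity
  calc min l τ ^ 2 = min l τ ^ (2 - α) * min l τ ^ α := by
        rw [← Real.rpow_add hmin, sub_add_cancel, ← Real.rpow_natCast]
        norm_num
    _ ≤ τ ^ (2 - α) * l ^ α := by
        gcongr
        · exact min_le_right l τ
        · exact min_le_left l τ

lemma integral_sq_mul_min_le {X : Type*} [MeasurableSpace X] {Q : Measure X} {h l : X → ℝ}
    {M τ α : ℝ} (hh : ∀ᵐ x ∂Q, ‖h x‖ ≤ M) (hl : ∀ x, 0 ≤ l x) (hτ : 0 ≤ τ) (hα0 : 0 ≤ α)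
    (hα2 : α ≤ 2) (hI : Integrable (fun x => l x ^ α) Q) :
    ∫ x, (h x * min (l x) τ) ^ 2 ∂Q ≤ M ^ 2 * τ ^ (2 - α) * ∫ x, l x ^ α ∂Q := by
  rw [← integral_const_mul]
  refine integral_mono_of_nonneg (.of_forall fun x => sq_nonneg _) (hI.const_mul _) ?_
  filter_upwards [hh] with x hx
  have hh_sq : h x ^ 2 ≤ M ^ 2 := by
    rw [← sq_abs]
    exact pow_le_pow_left₀ (abs_nonneg _) hx 2
  calc (h x * min (l x) τ) ^ 2 = h x ^ 2 * min (l x) τ ^ 2 := mul_pow _ _ 2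
    _ ≤ M ^ 2 * (τ ^ (2 - α) * l x ^ α) :=
        mul_le_mul hh_sq (min_sq_le_rpow_mul_rpow (hl x) hτ hα0 hα2) (sq_nonneg _)
          ((sq_nonneg _).trans hh_sq)
    _ = M ^ 2 * τ ^ (2 - α) * l x ^ α := by ring

lemma variance_mean_comp_of_iIndepFun {Ω X : Type*} [MeasurableSpace Ω] [MeasurableSpace X]
    {μ : Measure Ω} {Q : Measure X} {n : ℕ} {Xs : Fin n → Ω → X}
    (hXs : ∀ i, MeasurePreserving (Xs i) μ Q) (hindep : iIndepFun Xs μ) {g : X → ℝ}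
    (hg : Measurable g) (hg2 : MemLp g 2 Q) :
    variance (fun ω => (1 / (n : ℝ)) * ∑ i, g (Xs i ω)) μ = (1 / (n : ℝ)) * variance g Q := by
  have hsum : (fun ω => ∑ i, g (Xs i ω)) = ∑ i, fun ω => g (Xs i ω) := by
    ext ω
    simp
  have hpair : Set.Pairwise ↑(Finset.univ : Finset (Fin n))
      fun i j => IndepFun (fun ω => g (Xs i ω)) (fun ω => g (Xs j ω)) μ :=
    fun i _ j _ hij => (hindep.indepFun hij).comp hg hg
  rw [variance_const_mul, hsum, IndepFun.variance_sum (X := fun i ω => g (Xs i ω))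
    (fun i _ => hg2.comp_measurePreserving (hXs i)) hpair]
  simp only [(hXs _).variance_fun_comp hg.aemeasurable, Finset.sum_const, Finset.card_univ,
    Fintype.card_fin, nsmul_eq_mul]
  rcases n.eq_zero_or_pos with rfl | hn
  · simp
  · field_simp

theorem truncated_lr_variance_bound_inftyNorm_general
    {X : Type*} [MeasurableSpace X] {Ω : Type*} [MeasurableSpace Ω]
    (P Q : Measure X) [IsProbabilityMeasure Q]
    (h : X → ℝ) (hmeas : Measurable h)
    (hinf : eLpNorm h ⊤ Q < ⊤)
    (α : ℝ) (hα1 : 1 < α) (hα2 : α ≤ 2)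
    (hI : Integrable (fun x => lr P Q x ^ α) Q)
    (τ : ℝ) (hτ : 0 < τ)
    (μ : Measure Ω)
    (n : ℕ) (Xs : Fin n → Ω → X)
    (hXmeas : ∀ i, Measurable (Xs i))
    (hid : ∀ i, Measure.map (Xs i) μ = Q)
    (hindep : iIndepFun Xs μ) :
    variance (fun ω => (1 / (n : ℝ)) * ∑ i, h (Xs i ω) * min (lr P Q (Xs i ω)) τ) μ ≤
      (1 / (n : ℝ)) * (eLpNorm h ⊤ Q).toReal ^ 2 * τ ^ (2 - α) * Ialpha P Q α := by
  have hlr : Measurable (lr P Q) := (Measure.measurable_rnDeriv P Q).ennreal_toReal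
  have hlr_nonneg : ∀ x, 0 ≤ lr P Q x := fun _ => ENNReal.toReal_nonneg
  have hh : ∀ᵐ x ∂Q, ‖h x‖ ≤ (eLpNorm h ⊤ Q).toReal := by
    rw [toReal_eLpNorm hmeas.aestronglyMeasurable]
    exact ae_le_lpNorm_exponent_top ⟨hmeas.aestronglyMeasurable, hinf⟩
  set g : X → ℝ := fun x => h x * min (lr P Q x) τ
  have hg : Measurable g := hmeas.mul (hlr.min measurable_const)
  have hg2 : MemLp g 2 Q := by
    refine .of_bound hg.aestronglyMeasurable ((eLpNorm h ⊤ Q).toReal * τ) ?_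
    filter_upwards [hh] with x hx
    have hmin_nonneg : 0 ≤ min (lr P Q x) τ := le_min (hlr_nonneg x) hτ.le
    rw [norm_mul, Real.norm_of_nonneg hmin_nonneg]
    exact mul_le_mul hx (min_le_right _ _) hmin_nonneg ((norm_nonneg _).trans hx)
  calc variance (fun ω => (1 / (n : ℝ)) * ∑ i, g (Xs i ω)) μ
      = (1 / (n : ℝ)) * variance g Q :=
        variance_mean_comp_of_iIndepFun (fun i => ⟨hXmeas i, hid i⟩) hindep hg hg2
    _ ≤ (1 / (n : ℝ)) * ∫ x, g x ^ 2 ∂Q := by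
        gcongr
        exact variance_le_expectation_sq hg.aestronglyMeasurable
    _ ≤ (1 / (n : ℝ)) * ((eLpNorm h ⊤ Q).toReal ^ 2 * τ ^ (2 - α) * Ialpha P Q α) := by
        gcongr
        exact integral_sq_mul_min_le hh hlr_nonneg hτ.le (by linarith)
          hα2 hI
    _ = _ := by ring

/-- Variance bound for the truncated likelihood-ratio estimator under the `∞`-norm:
`Var(h̄ₙ^{Tru}) ≤ (1/n)‖h‖²_{∞,Q} τ^{2−α} I_α(P‖Q)`. -/
theorem truncated_lr_variance_bound_inftyNorm
    {X : Type*} [MeasurableSpace X] {Ω : Type*} [MeasurableSpace Ω]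
    (P Q : Measure X) [IsProbabilityMeasure P] [IsProbabilityMeasure Q]
    (hPQ : P ≪ Q) (h : X → ℝ) (hmeas : Measurable h)
    (hinf : eLpNorm h ⊤ Q < ⊤)
    (α : ℝ) (hα1 : 1 < α) (hα2 : α ≤ 2)
    (hI : Integrable (fun x => lr P Q x ^ α) Q)
    (τ : ℝ) (hτ : 0 < τ)
    (μ : Measure Ω) [IsProbabilityMeasure μ]
    (n : ℕ) (hn : 0 < n) (Xs : Fin n → Ω → X)
    (hXmeas : ∀ i, Measurable (Xs i))
    (hid : ∀ i, Measure.map (Xs i) μ = Q)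
    (hindep : iIndepFun Xs μ) :
    variance (fun ω => (1 / (n : ℝ)) * ∑ i, h (Xs i ω) * min (lr P Q (Xs i ω)) τ) μ ≤
      (1 / (n : ℝ)) * (eLpNorm h ⊤ Q).toReal ^ 2 * τ ^ (2 - α) * Ialpha P Q α :=
  truncated_lr_variance_bound_inftyNorm_general P Q h hmeas hinf α hα1 hα2 hI τ hτ μ n Xs hXmeas hid
    hindep
end

section
/- For k ∈ [1,2], the function g(x) = √2·x^{k−1} + (1/3)x^k + x^{k−2} is strictly convex on (0,∞). -/
/-!
The second derivative factors as `g''(x) = x^(k-4) · g₁(x)` with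
`g₁(x) = √2 (k-1)(k-2) x + (1/3) k (k-1) x² + (k-2)(k-3)`, and completing the square gives
`12k · g₁(x) = (k-1)(2kx - 3√2 (2-k))² + 6 (2-k)(k² - 3k + 6)`.
For `k < 2` the second summand is positive; for `k = 2` the first one is, as `x > 0`.
-/

open Real

lemma deriv2_rpow_const (p x : ℝ) :
    deriv^[2] (fun x : ℝ => x ^ p) x = p * (p - 1) * x ^ (p - 2) := by
  simp [iter_deriv_rpow_const, descPochhammer_succ_right, mul_assoc]

lemma deriv2_truncation_objective (k : ℝ) {x : ℝ} (hx : 0 < x) :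
    deriv^[2] (fun x : ℝ => √2 * x ^ (k - 1) + 1 / 3 * x ^ k + x ^ (k - 2)) x =
      x ^ (k - 4) * (√2 * (k - 1) * (k - 2) * x + 1 / 3 * k * (k - 1) * x ^ 2 + (k - 2) * (k - 3)) := by
  have hC (p : ℝ) : ContDiffAt ℝ 2 (fun x : ℝ => x ^ p) x := contDiffAt_rpow_const_of_ne hx.ne'
  rw [← iteratedDeriv_eq_iterate,
    iteratedDeriv_fun_add ((contDiffAt_const.mul (hC _)).add (contDiffAt_const.mul (hC _))) (hC _),
    iteratedDeriv_fun_add (contDiffAt_const.mul (hC _)) (contDiffAt_const.mul (hC _)),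
    iteratedDeriv_const_mul_field, iteratedDeriv_const_mul_field]
  simp only [iteratedDeriv_eq_iterate, deriv2_rpow_const]
  have hshift (p : ℝ) (n : ℕ) (hp : p = k - 4 + n) : x ^ p = x ^ (k - 4) * x ^ n := by
    rw [hp, rpow_add hx, rpow_natCast]
  rw [hshift (k - 1 - 2) 1 (by push_cast; ring), hshift (k - 2) 2 (by push_cast; ring),
    show k - 2 - 2 = k - 4 by ring]
  ring

lemma truncation_quadratic_pos {k x : ℝ} (hk1 : 1 ≤ k) (hk2 : k ≤ 2) (hx : 0 < x) :
    0 < √2 * (k - 1) * (k - 2) * x + 1 / 3 * k * (k - 1) * x ^ 2 + (k - 2) * (k - 3) := by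
  have hsq : √2 ^ 2 = 2 := sq_sqrt zero_le_two
  have hsquare :
      12 * k * (√2 * (k - 1) * (k - 2) * x + 1 / 3 * k * (k - 1) * x ^ 2 + (k - 2) * (k - 3)) =
        (k - 1) * (2 * k * x - 3 * √2 * (2 - k)) ^ 2 + 6 * (2 - k) * (k ^ 2 - 3 * k + 6) := by
    linear_combination (-(9 * (k - 1) * (2 - k) ^ 2)) * hsq
  rw [← mul_pos_iff_of_pos_left (by linarith : (0 : ℝ) < 12 * k), hsquare]
  have hsquare_nonneg := mul_nonneg (sub_nonneg.2 hk1) (sq_nonneg (2 * k * x - 3 * √2 * (2 - k)))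
  rcases hk2.lt_or_eq with hk_lt | rfl
  · have hconst : 0 < (2 - k) * (k ^ 2 - 3 * k + 6) := mul_pos (sub_pos.2 hk_lt) (by nlinarith)
    linarith
  · norm_num
    positivity

/-- For `k ∈ [1,2]`, the function `g(x) = √2·x^{k−1} + (1/3)x^k + x^{k−2}` is
strictly convex on `(0,∞)`. -/
theorem strictConvexOn_truncation_objective (k : ℝ) (hk1 : 1 ≤ k) (hk2 : k ≤ 2) :
    StrictConvexOn ℝ (Set.Ioi (0 : ℝ))
      (fun x : ℝ => Real.sqrt 2 * x ^ (k - 1) + (1 / 3) * x ^ k + x ^ (k - 2)) := by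
  refine strictConvexOn_of_deriv2_pos (convex_Ioi 0) ?_ fun x hx => ?_
  · intro x hx
    apply ContinuousAt.continuousWithinAt
    fun_prop (disch := exact Or.inl (ne_of_gt hx))
  · rw [interior_Ioi] at hx
    rw [deriv2_truncation_objective k hx]
    exact mul_pos (rpow_pos_of_pos hx _) (truncation_quadratic_pos hk1 hk2 hx)
end

section
/- If ‖h‖_{p,Q} < ∞ for some p > 2 and I_α(P‖Q) < ∞ for some α ∈ (p/(p−1), 2p/(p−2)), then for i.i.d. X̃_i ∼ Q, Var((1/n)∑ h(X̃_i)min(l(X̃_i),τ)) ≤ (1/n) ‖h‖²_{p,Q} · τ^{2−α+2α/p} · I_α(P‖Q)^{1−2/p}. -/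
open MeasureTheory ProbabilityTheory

/-!
The summands `h(X̃ᵢ) min(l(X̃ᵢ), τ)` are i.i.d., so the variance of their mean is `Var_Q(h m) / n`
with `m = min(l, τ)`, and `Var_Q(h m) ≤ E_Q[h² m²]`. Hölder's inequality with the conjugate
exponents `p/2` and `p/(p-2)` bounds this by `‖h‖²_{p,Q} ‖m‖²_{s,Q}` with `s = 2p/(p-2)`. Since
`α ≤ s`, the pointwise bound `min(l, τ)^s ≤ τ^(s-α) l^α` gives `‖m‖_{s,Q}^s ≤ τ^(s-α) I_α(P‖Q)`,
and raising to the power `2/s = 1 - 2/p` produces the stated exponents.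
-/

theorem sq_rpow_div_two (x r : ℝ) : (x ^ 2) ^ (r / 2) = |x| ^ r := by
  rw [← sq_abs, ← Real.rpow_natCast, ← Real.rpow_mul (abs_nonneg x)]
  congr 1
  push_cast
  ring

theorem min_rpow_le_rpow_mul_rpow {l τ α s : ℝ} (hl : 0 ≤ l) (hτ : 0 ≤ τ) (hα : 0 ≤ α)
    (hαs : α ≤ s) : min l τ ^ s ≤ τ ^ (s - α) * l ^ α := by
  have hm : 0 ≤ min l τ := le_min hl hτ
  calc min l τ ^ s = min l τ ^ (s - α) * min l τ ^ α := by
        rw [← Real.rpow_add_of_nonneg hm (sub_nonneg.2 hαs) hα, sub_add_cancel]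
    _ ≤ τ ^ (s - α) * l ^ α := by
        gcongr
        exacts [min_le_right l τ, min_le_left l τ]

section Lp

variable {X : Type*} [MeasurableSpace X] {μ : Measure X}

theorem MeasureTheory.MemLp.sq_ofReal {f : X → ℝ} {r : ℝ} (hf : MemLp f (ENNReal.ofReal r) μ) :
    MemLp (fun x => f x ^ 2) (ENNReal.ofReal (r / 2)) μ := by
  convert hf.norm_rpow_div 2 using 1
  · ext x
    simp [sq_abs]
  · rw [ENNReal.ofReal_div_of_pos two_pos, ENNReal.ofReal_ofNat]

theorem memLp_ofReal_of_integrable_abs_rpow {f : X → ℝ} {r : ℝ} (hf : AEStronglyMeasurable f μ)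
    (hr : 0 < r) (hint : Integrable (fun x => |f x| ^ r) μ) : MemLp f (ENNReal.ofReal r) μ :=
  (integrable_norm_rpow_iff hf (ENNReal.ofReal_pos.2 hr).ne' ENNReal.ofReal_ne_top).1
    (by simpa [ENNReal.toReal_ofReal hr.le] using hint)

theorem pNorm_sq (f : X → ℝ) (r : ℝ) :
    pNorm f r μ ^ 2 = (∫ x, |f x| ^ r ∂μ) ^ (1 / (r / 2)) := by
  rw [pNorm, ← Real.rpow_natCast, ← Real.rpow_mul (integral_nonneg fun x => by positivity)]
  congr 1
  push_cast
  ring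

theorem integral_mul_sq_le_pNorm_sq_mul_pNorm_sq {f g : X → ℝ} {r s : ℝ}
    (hrs : (r / 2).HolderConjugate (s / 2))
    (hf : MemLp f (ENNReal.ofReal r) μ) (hg : MemLp g (ENNReal.ofReal s) μ) :
    ∫ x, (f x * g x) ^ 2 ∂μ ≤ pNorm f r μ ^ 2 * pNorm g s μ ^ 2 := by
  simpa only [mul_pow, sq_rpow_div_two, pNorm_sq] using
    integral_mul_le_Lp_mul_Lq_of_nonneg hrs (ae_of_all _ fun x => sq_nonneg (f x))
      (ae_of_all _ fun x => sq_nonneg (g x)) hf.sq_ofReal hg.sq_ofReal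

theorem integral_min_rpow_le {l : X → ℝ} {τ α s : ℝ} (hl : ∀ x, 0 ≤ l x) (hτ : 0 ≤ τ)
    (hα : 0 ≤ α) (hαs : α ≤ s) (hint : Integrable (fun x => l x ^ α) μ) :
    ∫ x, min (l x) τ ^ s ∂μ ≤ τ ^ (s - α) * ∫ x, l x ^ α ∂μ := by
  rw [← integral_const_mul]
  exact integral_mono_of_nonneg (ae_of_all _ fun x => Real.rpow_nonneg (le_min (hl x) hτ) s)
    (hint.const_mul _) (ae_of_all _ fun x => min_rpow_le_rpow_mul_rpow (hl x) hτ hα hαs)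

end Lp

theorem pNorm_truncated_lr_sq_le {X : Type*} [MeasurableSpace X] (P Q : Measure X) {p α τ : ℝ}
    (hp : 2 < p) (hα : 0 ≤ α) (hαp : α ≤ 2 * p / (p - 2)) (hτ : 0 ≤ τ)
    (hI : Integrable (fun x => lr P Q x ^ α) Q) :
    pNorm (fun x => min (lr P Q x) τ) (2 * p / (p - 2)) Q ^ 2 ≤
      τ ^ (2 - α + 2 * α / p) * Ialpha P Q α ^ (1 - 2 / p) := by
  set s := 2 * p / (p - 2) with hs_def
  have hl : ∀ x, 0 ≤ lr P Q x := fun x => ENNReal.toReal_nonneg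
  have hs : 0 < s := by positivity
  have hI0 : 0 ≤ Ialpha P Q α := integral_nonneg fun x => Real.rpow_nonneg (hl x) α
  rw [pNorm_sq]
  calc (∫ x, |min (lr P Q x) τ| ^ s ∂Q) ^ (1 / (s / 2))
      = (∫ x, min (lr P Q x) τ ^ s ∂Q) ^ (1 / (s / 2)) := by
        simp_rw [abs_of_nonneg (le_min (hl _) hτ)]
    _ ≤ (τ ^ (s - α) * Ialpha P Q α) ^ (1 / (s / 2)) := by
        gcongr
        · exact integral_nonneg fun x => Real.rpow_nonneg (le_min (hl x) hτ) s
        · exact integral_min_rpow_le hl hτ hα hαp hI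
    _ = τ ^ (2 - α + 2 * α / p) * Ialpha P Q α ^ (1 - 2 / p) := by
        rw [Real.mul_rpow (by positivity) hI0, ← Real.rpow_mul hτ, hs_def]
        have hp0 : p ≠ 0 := by linarith
        have hp2 : p - 2 ≠ 0 := by linarith
        congr 2 <;> field_simp
        ring

theorem variance_const_mul_sum_comp_eq {Ω X ι : Type*} [MeasurableSpace Ω] [MeasurableSpace X]
    [Fintype ι] {μ : Measure Ω} {Q : Measure X} {Xs : ι → Ω → X}
    (hXs : ∀ i, MeasurePreserving (Xs i) μ Q) (hindep : iIndepFun Xs μ) {f : X → ℝ}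
    (hf : Measurable f) (hf2 : MemLp f 2 Q) (c : ℝ) :
    variance (fun ω => c * ∑ i, f (Xs i ω)) μ = c ^ 2 * (Fintype.card ι * variance f Q) := by
  have hsum : (fun ω => ∑ i, f (Xs i ω)) = ∑ i, f ∘ Xs i := by
    ext ω
    simp
  have hvar : ∀ i, variance (f ∘ Xs i) μ = variance f Q := fun i =>
    (hXs i).variance_fun_comp hf.aemeasurable
  rw [variance_const_mul, hsum, IndepFun.variance_sum (fun i _ => hf2.comp_measurePreserving (hXs i))
    (fun i _ j _ hij => (hindep.indepFun hij).comp hf hf)]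
  simp [hvar]

theorem truncated_lr_variance_bound_pNorm_general
    {X : Type*} [MeasurableSpace X] {Ω : Type*} [MeasurableSpace Ω]
    (P Q : Measure X) [IsProbabilityMeasure Q]
    (h : X → ℝ) (hmeas : Measurable h)
    (p : ℝ) (hp : 2 < p) (hpnorm : Integrable (fun x => |h x| ^ p) Q)
    (α : ℝ) (hα1 : p / (p - 1) < α) (hα2 : α < 2 * p / (p - 2))
    (hI : Integrable (fun x => lr P Q x ^ α) Q)
    (τ : ℝ) (hτ : 0 < τ)
    (μ : Measure Ω)
    (n : ℕ) (Xs : Fin n → Ω → X)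
    (hXmeas : ∀ i, Measurable (Xs i))
    (hid : ∀ i, Measure.map (Xs i) μ = Q)
    (hindep : iIndepFun Xs μ) :
    variance (fun ω => (1 / (n : ℝ)) * ∑ i, h (Xs i ω) * min (lr P Q (Xs i ω)) τ) μ ≤
      (1 / (n : ℝ)) * pNorm h p Q ^ 2 * τ ^ (2 - α + 2 * α / p) *
        Ialpha P Q α ^ (1 - 2 / p) := by
  set m : X → ℝ := fun x => min (lr P Q x) τ
  have hm_meas : Measurable m :=
    (Measure.measurable_rnDeriv P Q).ennreal_toReal.min measurable_const
  have hm : MemLp m ⊤ Q := memLp_top_of_bound hm_meas.aestronglyMeasurable τ <| ae_of_all _ fun x =>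
    (Real.norm_of_nonneg (le_min ENNReal.toReal_nonneg hτ.le)).trans_le (min_le_right _ _)
  have hh : MemLp h (ENNReal.ofReal p) Q :=
    memLp_ofReal_of_integrable_abs_rpow hmeas.aestronglyMeasurable (by linarith) hpnorm
  have hhm_meas : Measurable fun x => h x * m x := hmeas.mul hm_meas
  have hhm : MemLp (fun x => h x * m x) 2 Q :=
    hm.mul' (hh.mono_exponent (show (2 : ENNReal) ≤ ENNReal.ofReal p by
      rw [← ENNReal.ofReal_ofNat 2]; exact ENNReal.ofReal_le_ofReal hp.le))
  have hrs : (p / 2).HolderConjugate (2 * p / (p - 2) / 2) :=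
    (Real.holderConjugate_iff_eq_conjExponent (by linarith)).2 (by field_simp)
  have hα : 0 ≤ α := (div_pos (by linarith) (by linarith)).le.trans hα1.le
  calc _ = (1 / (n : ℝ)) ^ 2 * (n * variance (fun x => h x * m x) Q) := by
        rw [variance_const_mul_sum_comp_eq (fun i => ⟨hXmeas i, hid i⟩) hindep hhm_meas hhm,
          Fintype.card_fin]
    _ = 1 / n * variance (fun x => h x * m x) Q := by
        rcases eq_or_ne (n : ℝ) 0 with hn | hn
        · simp [hn]
        · field_simp
    _ ≤ 1 / n * ∫ x, (h x * m x) ^ 2 ∂Q := by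
        gcongr
        simpa using variance_le_expectation_sq hhm_meas.aestronglyMeasurable
    _ ≤ 1 / n * (pNorm h p Q ^ 2 * pNorm m (2 * p / (p - 2)) Q ^ 2) := by
        gcongr
        exact integral_mul_sq_le_pNorm_sq_mul_pNorm_sq hrs hh (hm.mono_exponent le_top)
    _ ≤ 1 / n * (pNorm h p Q ^ 2 * (τ ^ (2 - α + 2 * α / p) * Ialpha P Q α ^ (1 - 2 / p))) := by
        gcongr
        exact pNorm_truncated_lr_sq_le P Q hp hα hα2.le hτ.le hI
    _ = _ := by ring

/-- Variance bound for the truncated likelihood-ratio estimator under the `p`-norm: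
`Var((1/n)∑ h(X̃ᵢ)min(l(X̃ᵢ),τ)) ≤ (1/n)‖h‖²_{p,Q} τ^{2−α+2α/p} I_α(P‖Q)^{1−2/p}`. -/
theorem truncated_lr_variance_bound_pNorm
    {X : Type*} [MeasurableSpace X] {Ω : Type*} [MeasurableSpace Ω]
    (P Q : Measure X) [IsProbabilityMeasure P] [IsProbabilityMeasure Q]
    (hPQ : P ≪ Q) (h : X → ℝ) (hmeas : Measurable h)
    (p : ℝ) (hp : 2 < p) (hpnorm : Integrable (fun x => |h x| ^ p) Q)
    (α : ℝ) (hα1 : p / (p - 1) < α) (hα2 : α < 2 * p / (p - 2))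
    (hI : Integrable (fun x => lr P Q x ^ α) Q)
    (τ : ℝ) (hτ : 0 < τ)
    (μ : Measure Ω) [IsProbabilityMeasure μ]
    (n : ℕ) (hn : 0 < n) (Xs : Fin n → Ω → X)
    (hXmeas : ∀ i, Measurable (Xs i))
    (hid : ∀ i, Measure.map (Xs i) μ = Q)
    (hindep : iIndepFun Xs μ) :
    variance (fun ω => (1 / (n : ℝ)) * ∑ i, h (Xs i ω) * min (lr P Q (Xs i ω)) τ) μ ≤
      (1 / (n : ℝ)) * pNorm h p Q ^ 2 * τ ^ (2 - α + 2 * α / p) *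
        Ialpha P Q α ^ (1 - 2 / p) :=
  truncated_lr_variance_bound_pNorm_general P Q h hmeas p hp hpnorm α hα1 hα2 hI τ hτ μ n Xs hXmeas
    hid hindep
end
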